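/- arXiv:1904.06161 — 2 statements merged into one kernel-verified Lean document; each statement's English description precedes it below -/
import Mathlib

section
/- Let G be the symmetric group on {1,2,3,4} and S = {(1 2), (2 3), (3 4)} the standard Coxeter (lineal) generating set. Then the mean first passage times to the longest word w₀ = (1 4)(2 3) satisfy: from the identity, d(1 → w₀) = 1296/28 = 324/7; from (1 2), d((1 2) → w₀) = 1273/28; and from (1 4), d((1 4) → w₀) = 682/28 = 341/14. -/
open MeasureTheory
open scoped ENNReal

/-- Discrete measurable structure on the elements of a finset. -/
instance fintypeStepSpace {α : Type*} (S : Finset α) : MeasurableSpace S := ⊤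

/-- The right random walk on the Cayley graph of `(G,S)` started at the identity:
`W_0(ω) = 1` and `W_n(ω) = ω(0)·ω(1)⋯ω(n−1)`. -/
def walk {G : Type*} [Group G] (S : Finset G) (ω : ℕ → S) (n : ℕ) : G :=
  (List.ofFn fun i : Fin n => (ω i : G)).prod

/-- The first passage time `τ_g(ω) = inf { n : ℕ | W_n(ω) = g }`, valued in `ℕ∞`
(in particular it is `⊤` if the walk never reaches `g`). -/
noncomputable def tau {G : Type*} [Group G] (S : Finset G) (g : G) (ω : ℕ → S) : ℕ∞ :=
  sInf ((Nat.cast : ℕ → ℕ∞) '' {n : ℕ | walk S ω n = g})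

/-- `μ` is the infinite product over `ℕ` of the uniform probability measure on `S`:
a probability measure giving each cylinder set on the first `n` coordinates
probability `|S|⁻ⁿ`.  (These conditions determine the product measure uniquely.) -/
def IsUniformProductMeasure {G : Type*} [Group G] (S : Finset G)
    (μ : Measure (ℕ → S)) : Prop :=
  IsProbabilityMeasure μ ∧
    ∀ (n : ℕ) (w : Fin n → S),
      μ {ω | ∀ i : Fin n, ω (i : ℕ) = w i} = ((S.card : ℝ≥0∞))⁻¹ ^ n

/-- The mean first passage time `d(g) = ∫ τ_g dμ`, valued in `[0,∞]`. -/
noncomputable def mfpt {G : Type*} [Group G] (S : Finset G) (μ : Measure (ℕ → S))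
    (g : G) : ℝ≥0∞ :=
  ∫⁻ ω, (tau S g ω : ℝ≥0∞) ∂μ

/-- The first passage time of the walk started at `x` to the target `y`:
`τ_{x→y}(ω) = inf { n : ℕ | x·W_n(ω) = y }`, valued in `ℕ∞`. -/
noncomputable def tauFrom {G : Type*} [Group G] (S : Finset G) (x y : G) (ω : ℕ → S) :
    ℕ∞ :=
  sInf ((Nat.cast : ℕ → ℕ∞) '' {n : ℕ | x * walk S ω n = y})

/-- The mean first passage time from `x` to `y`: `d(x → y) = ∫ τ_{x→y} dμ`. -/
noncomputable def mfptFrom {G : Type*} [Group G] (S : Finset G) (μ : Measure (ℕ → S))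
    (x y : G) : ℝ≥0∞ :=
  ∫⁻ ω, (tauFrom S x y ω : ℝ≥0∞) ∂μ


namespace MFPTAux

abbrev G4 := Equiv.Perm (Fin 4)
abbrev S₀ : Finset G4 := {Equiv.swap 0 1, Equiv.swap 1 2, Equiv.swap 2 3}

/-- `28` times the mean first passage time to `g` for the walk started at `1`. -/
def mval (g : G4) : ℕ :=
  match (g 0).val, (g 1).val, (g 2).val with
  | 0, 1, 2 => 0
  | 0, 1, 3 => 625
  | 0, 2, 1 => 682
  | 0, 2, 3 => 981
  | 0, 3, 1 => 981
  | 0, 3, 2 => 1081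
  | 1, 0, 2 => 625
  | 1, 0, 3 => 810
  | 1, 2, 0 => 981
  | 1, 2, 3 => 1153
  | 1, 3, 0 => 1096
  | 1, 3, 2 => 1197
  | 2, 0, 1 => 981
  | 2, 0, 3 => 1096
  | 2, 1, 0 => 1081
  | 2, 1, 3 => 1197
  | 2, 3, 0 => 1242
  | 2, 3, 1 => 1273
  | 3, 0, 1 => 1153
  | 3, 0, 2 => 1197
  | 3, 1, 0 => 1197
  | 3, 1, 2 => 1258
  | 3, 2, 0 => 1273
  | 3, 2, 1 => 1296
  | _, _, _ => 0

theorem key : ∀ g : G4, (g = 1 → mval g = 0) ∧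
    (g ≠ 1 → 28 ≤ mval g ∧ mval g ≤ 1296 ∧ 3 * mval g = 84 + ∑ s ∈ S₀, mval (s⁻¹ * g)) := by
  decide

def A : ℕ → G4 → ℕ
  | 0 => fun g => if g = 1 then 0 else 1
  | n+1 => fun g => if g = 1 then 0 else ∑ s ∈ S₀, A n (s⁻¹ * g)

noncomputable def F (g : G4) : ℝ≥0∞ := (mval g : ℝ≥0∞) * 28⁻¹

noncomputable def Phi (h : G4 → ℝ≥0∞) : G4 → ℝ≥0∞ := fun g =>
  if g = 1 then 0 else 1 + 3⁻¹ * ∑ s ∈ S₀, h (s⁻¹ * g)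

lemma A_one (n : ℕ) : A n 1 = 0 := by cases n <;> simp [A]

lemma A_zero {g : G4} (hg : g ≠ 1) : A 0 g = 1 := if_neg hg

lemma A_succ {g : G4} (hg : g ≠ 1) (n : ℕ) : A (n+1) g = ∑ s ∈ S₀, A n (s⁻¹ * g) := by
  show (if g = 1 then 0 else ∑ s ∈ S₀, A n (s⁻¹ * g)) = _
  rw [if_neg hg]

lemma h3 : (3 : ℝ≥0∞) * 3⁻¹ = 1 := ENNReal.mul_inv_cancel (by norm_num) (by norm_num)
lemma h28 : (28 : ℝ≥0∞) * 28⁻¹ = 1 := ENNReal.mul_inv_cancel (by norm_num) (by norm_num)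

lemma phi_fixed : Phi F = F := by
  funext g
  by_cases hg : g = 1
  · subst hg
    simp [Phi, F, (key 1).1 rfl]
  · rw [Phi.eq_def, if_neg hg]
    have hkey := ((key g).2 hg).2.2
    have hsum : ∑ s ∈ S₀, F (s⁻¹ * g) = ((∑ s ∈ S₀, mval (s⁻¹ * g) : ℕ) : ℝ≥0∞) * 28⁻¹ := by
      rw [Nat.cast_sum, Finset.sum_mul]
      rfl
    rw [hsum]
    set σ : ℕ := ∑ s ∈ S₀, mval (s⁻¹ * g) with hσ
    rw [← ENNReal.mul_right_inj (a := (84 : ℝ≥0∞)) (by norm_num) (by norm_num)]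
    show (84:ℝ≥0∞) * (1 + 3⁻¹ * ((σ:ℝ≥0∞) * 28⁻¹)) = 84 * F g
    have hc : ((84 : ℕ) + σ : ℕ) = 3 * mval g := hkey.symm
    calc (84:ℝ≥0∞) * (1 + 3⁻¹ * ((σ:ℝ≥0∞) * 28⁻¹))
        = 84 + (3*3⁻¹) * ((28*28⁻¹) * (σ:ℝ≥0∞)) := by
          rw [show (84:ℝ≥0∞) = 3*28 by norm_num]; ring
      _ = ((84 + σ : ℕ) : ℝ≥0∞) := by rw [h3, h28]; push_cast; ring
      _ = ((3 * mval g : ℕ) : ℝ≥0∞) := by rw [hc]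
      _ = 3 * (mval g : ℝ≥0∞) := by push_cast; ring
      _ = (3 * (mval g : ℝ≥0∞)) * (28 * 28⁻¹) := by rw [h28, mul_one]
      _ = 84 * F g := by rw [F, show (84:ℝ≥0∞) = 3*28 by norm_num]; ring

lemma phi_mono {h1 h2 : G4 → ℝ≥0∞} (h : h1 ≤ h2) : Phi h1 ≤ Phi h2 := by
  intro g
  rw [Phi.eq_def, Phi.eq_def]
  by_cases hg : g = 1
  · simp [hg]
  · rw [if_neg hg, if_neg hg]
    exact add_le_add le_rfl (mul_le_mul' le_rfl (Finset.sum_le_sum fun s _ => h _))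

lemma iter_le_F (N : ℕ) : Phi^[N] (fun _ => 0) ≤ F := by
  induction N with
  | zero => intro g; exact zero_le
  | succ n ih =>
      rw [Function.iterate_succ_apply']
      calc Phi (Phi^[n] fun _ => 0) ≤ Phi F := phi_mono ih
        _ = F := phi_fixed

lemma iter_eq (N : ℕ) (g : G4) :
    Phi^[N] (fun _ => 0) g = ∑ n ∈ Finset.range N, (A n g : ℝ≥0∞) * 3⁻¹ ^ n := by
  induction N generalizing g with
  | zero => simp
  | succ N ih =>
      rw [Function.iterate_succ_apply', Phi.eq_def]
      by_cases hg : g = 1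
      · subst hg
        simp [A_one]
      · rw [if_neg hg]
        have hstep : ∑ s ∈ S₀, Phi^[N] (fun _ => 0) (s⁻¹ * g)
            = ∑ n ∈ Finset.range N, (A (n+1) g : ℝ≥0∞) * 3⁻¹ ^ n := by
          calc ∑ s ∈ S₀, Phi^[N] (fun _ => 0) (s⁻¹ * g)
              = ∑ s ∈ S₀, ∑ n ∈ Finset.range N, (A n (s⁻¹ * g) : ℝ≥0∞) * 3⁻¹ ^ n :=
                Finset.sum_congr rfl fun s _ => ih _
            _ = ∑ n ∈ Finset.range N, ∑ s ∈ S₀, (A n (s⁻¹ * g) : ℝ≥0∞) * 3⁻¹ ^ n :=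
                Finset.sum_comm
            _ = ∑ n ∈ Finset.range N, (A (n+1) g : ℝ≥0∞) * 3⁻¹ ^ n := by
                refine Finset.sum_congr rfl fun n _ => ?_
                rw [← Finset.sum_mul, A_succ hg, Nat.cast_sum]
        rw [hstep, Finset.mul_sum, Finset.sum_range_succ' _ N]
        have h0 : (A 0 g : ℝ≥0∞) * 3⁻¹ ^ 0 = 1 := by rw [A_zero hg]; simp
        rw [h0]
        rw [add_comm (1 : ℝ≥0∞)]
        congr 1
        refine Finset.sum_congr rfl fun n _ => ?_
        rw [pow_succ]
        ring

lemma nat_decay (n : ℕ) (g : G4) :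
    1296 ^ n * 28 * A n g ≤ mval g * 3 ^ n * 1268 ^ n := by
  induction n generalizing g with
  | zero =>
      by_cases hg : g = 1
      · simp [hg, A_one]
      · simp only [pow_zero, one_mul, mul_one, A_zero hg]
        exact ((key g).2 hg).1
  | succ n ih =>
      by_cases hg : g = 1
      · simp [hg, A_one]
      · rw [A_succ hg]
        have hkey := ((key g).2 hg).2.2
        have hle : mval g ≤ 1296 := ((key g).2 hg).2.1
        calc 1296 ^ (n+1) * 28 * ∑ s ∈ S₀, A n (s⁻¹ * g)
            = 1296 * ∑ s ∈ S₀, 1296 ^ n * 28 * A n (s⁻¹ * g) := by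
              rw [Finset.mul_sum, Finset.mul_sum, pow_succ]
              refine Finset.sum_congr rfl fun s _ => ?_
              ring
          _ ≤ 1296 * ∑ s ∈ S₀, mval (s⁻¹ * g) * 3 ^ n * 1268 ^ n := by
              exact Nat.mul_le_mul_left _ (Finset.sum_le_sum fun s _ => ih _)
          _ = 1296 * (∑ s ∈ S₀, mval (s⁻¹ * g)) * (3 ^ n * 1268 ^ n) := by
              rw [← Finset.sum_mul, ← Finset.sum_mul]; ring
          _ ≤ mval g * 3 ^ (n+1) * 1268 ^ (n+1) := by
              have hσ : 3 * mval g = 84 + ∑ s ∈ S₀, mval (s⁻¹ * g) := hkey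
              have : 1296 * (∑ s ∈ S₀, mval (s⁻¹ * g)) ≤ 3 * 1268 * mval g := by omega
              calc 1296 * (∑ s ∈ S₀, mval (s⁻¹ * g)) * (3 ^ n * 1268 ^ n)
                  ≤ 3 * 1268 * mval g * (3 ^ n * 1268 ^ n) := Nat.mul_le_mul_right _ this
                _ = mval g * 3 ^ (n+1) * 1268 ^ (n+1) := by rw [pow_succ, pow_succ]; ring

lemma h1296' : (1296 : ℝ≥0∞) * 1296⁻¹ = 1 := ENNReal.mul_inv_cancel (by norm_num) (by norm_num)

lemma ennreal_decay (n : ℕ) (g : G4) :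
    (A n g : ℝ≥0∞) * 3⁻¹ ^ n ≤ (mval g : ℝ≥0∞) * 28⁻¹ * (1268 * 1296⁻¹) ^ n := by
  have hcast : ((1296:ℝ≥0∞) ^ n * 28 * A n g) ≤ (mval g : ℝ≥0∞) * 3 ^ n * 1268 ^ n := by
    have := nat_decay n g
    exact_mod_cast Nat.cast_le.mpr this
  have h1296 : (1296 : ℝ≥0∞) * 1296⁻¹ = 1 := ENNReal.mul_inv_cancel (by norm_num) (by norm_num)
  calc (A n g : ℝ≥0∞) * 3⁻¹ ^ n
      = ((1296*1296⁻¹) ^ n * (28*28⁻¹)) * ((A n g : ℝ≥0∞) * 3⁻¹ ^ n) := by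
        rw [h1296, h28]; simp
    _ = ((1296:ℝ≥0∞) ^ n * 28 * A n g) * (1296⁻¹ ^ n * 28⁻¹ * 3⁻¹ ^ n) := by
        rw [mul_pow]; ring
    _ ≤ ((mval g : ℝ≥0∞) * 3 ^ n * 1268 ^ n) * (1296⁻¹ ^ n * 28⁻¹ * 3⁻¹ ^ n) :=
        mul_le_mul_left hcast _
    _ = (mval g : ℝ≥0∞) * 28⁻¹ * (((3:ℝ≥0∞)*3⁻¹) ^ n * (1268 * 1296⁻¹) ^ n) := by
        rw [mul_pow, mul_pow]; ring
    _ = (mval g : ℝ≥0∞) * 28⁻¹ * (1268 * 1296⁻¹) ^ n := by rw [h3]; simp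

lemma upper_bound (N : ℕ) : ∀ g : G4,
    F g ≤ Phi^[N] (fun _ => 0) g + (1296 : ℝ≥0∞) * 28⁻¹ * ((A N g : ℝ≥0∞) * 3⁻¹ ^ N) := by
  induction N with
  | zero =>
      intro g
      by_cases hg : g = 1
      · simp [hg, F, (key 1).1 rfl]
      · have : F g ≤ (1296 : ℝ≥0∞) * 28⁻¹ := by
          rw [F]
          exact mul_le_mul_left (by exact_mod_cast Nat.cast_le.mpr ((key g).2 hg).2.1) _
        simpa [A_zero hg] using this
  | succ N ih =>
      intro g
      by_cases hg : g = 1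
      · simp [hg, F, (key 1).1 rfl]
      · conv_lhs => rw [← phi_fixed]
        rw [Phi.eq_def, if_neg hg]
        rw [Function.iterate_succ_apply', Phi.eq_def, if_neg hg]
        have hs : ∑ s ∈ S₀, F (s⁻¹ * g)
            ≤ ∑ s ∈ S₀, (Phi^[N] (fun _ => 0) (s⁻¹ * g)
                + (1296 : ℝ≥0∞) * 28⁻¹ * ((A N (s⁻¹ * g) : ℝ≥0∞) * 3⁻¹ ^ N)) :=
          Finset.sum_le_sum fun s _ => ih _
        calc 1 + 3⁻¹ * ∑ s ∈ S₀, F (s⁻¹ * g)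
            ≤ 1 + 3⁻¹ * ∑ s ∈ S₀, (Phi^[N] (fun _ => 0) (s⁻¹ * g)
                + (1296 : ℝ≥0∞) * 28⁻¹ * ((A N (s⁻¹ * g) : ℝ≥0∞) * 3⁻¹ ^ N)) :=
              add_le_add le_rfl (mul_le_mul' le_rfl hs)
          _ = (1 + 3⁻¹ * ∑ s ∈ S₀, Phi^[N] (fun _ => 0) (s⁻¹ * g))
                + (1296 : ℝ≥0∞) * 28⁻¹ * (((∑ s ∈ S₀, (A N (s⁻¹ * g) :ℕ) : ℕ) : ℝ≥0∞) * 3⁻¹ ^ (N+1)) := by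
              rw [Finset.sum_add_distrib, mul_add, Nat.cast_sum, pow_succ]
              rw [Finset.mul_sum, Finset.sum_mul, Finset.mul_sum]
              rw [add_assoc]
              congr 1
              congr 1
              rw [Finset.mul_sum]
              refine Finset.sum_congr rfl fun s _ => ?_
              ring
          _ = (1 + 3⁻¹ * ∑ s ∈ S₀, Phi^[N] (fun _ => 0) (s⁻¹ * g))
                + (1296 : ℝ≥0∞) * 28⁻¹ * ((A (N+1) g : ℝ≥0∞) * 3⁻¹ ^ (N+1)) := by
              rw [← A_succ hg]

lemma series_eq (g : G4) : ∑' n, (A n g : ℝ≥0∞) * 3⁻¹ ^ n = F g := by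
  rw [ENNReal.tsum_eq_iSup_nat]
  have hpart : ∀ N, ∑ n ∈ Finset.range N, (A n g : ℝ≥0∞) * 3⁻¹ ^ n
      = Phi^[N] (fun _ => 0) g := fun N => (iter_eq N g).symm
  apply le_antisymm
  · exact iSup_le fun N => by rw [hpart N]; exact iter_le_F N g
  · set c : ℝ≥0∞ := (1296 : ℝ≥0∞) * 28⁻¹ * ((mval g : ℝ≥0∞) * 28⁻¹) with hc
    have hc_ne_top : c ≠ ⊤ := by
      rw [hc]
      exact ENNReal.mul_ne_top (ENNReal.mul_ne_top (by norm_num) (by simp))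
        (ENNReal.mul_ne_top (by simp) (by simp))
    have hr : (1268 : ℝ≥0∞) * 1296⁻¹ < 1 := by
      rw [← h1296']
      exact (ENNReal.mul_lt_mul_iff_left (by norm_num) (by norm_num)).mpr (by norm_num)
    have htend : Filter.Tendsto
        (fun N => (⨆ n, ∑ i ∈ Finset.range n, (A i g : ℝ≥0∞) * 3⁻¹ ^ i)
          + c * ((1268 : ℝ≥0∞) * 1296⁻¹) ^ N) Filter.atTop
        (nhds ((⨆ n, ∑ i ∈ Finset.range n, (A i g : ℝ≥0∞) * 3⁻¹ ^ i) + c * 0)) := by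
      exact Filter.Tendsto.const_add _
        (ENNReal.Tendsto.const_mul (ENNReal.tendsto_pow_atTop_nhds_zero_of_lt_one hr)
          (Or.inr hc_ne_top))
    rw [mul_zero, add_zero] at htend
    refine ge_of_tendsto' htend fun N => ?_
    calc F g ≤ Phi^[N] (fun _ => 0) g + (1296 : ℝ≥0∞) * 28⁻¹ * ((A N g : ℝ≥0∞) * 3⁻¹ ^ N) :=
          upper_bound N g
      _ ≤ (⨆ n, ∑ i ∈ Finset.range n, (A i g : ℝ≥0∞) * 3⁻¹ ^ i)
            + c * ((1268 : ℝ≥0∞) * 1296⁻¹) ^ N := by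
          refine add_le_add ?_ ?_
          · rw [← hpart N]; exact le_iSup (fun n => ∑ i ∈ Finset.range n, (A i g : ℝ≥0∞) * 3⁻¹ ^ i) N
          · calc (1296 : ℝ≥0∞) * 28⁻¹ * ((A N g : ℝ≥0∞) * 3⁻¹ ^ N)
                ≤ (1296 : ℝ≥0∞) * 28⁻¹ * ((mval g : ℝ≥0∞) * 28⁻¹ * (1268 * 1296⁻¹) ^ N) :=
                  mul_le_mul' le_rfl (ennreal_decay N g)
              _ = c * ((1268 : ℝ≥0∞) * 1296⁻¹) ^ N := by rw [hc]; ring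



lemma walk_zero {G : Type*} [Group G] (S : Finset G) (ω : ℕ → S) : walk S ω 0 = 1 := by
  simp [walk]

lemma walk_congr {G : Type*} [Group G] (S : Finset G) {ω ω' : ℕ → S} {k : ℕ}
    (h : ∀ i < k, ω i = ω' i) : walk S ω k = walk S ω' k := by
  unfold walk
  congr 1
  exact congrArg _ (funext fun i => by rw [h i i.2])

lemma walk_succ_left {G : Type*} [Group G] (S : Finset G) (ω : ℕ → S) (k : ℕ) :
    walk S ω (k+1) = (ω 0 : G) * walk S (fun i => ω (i+1)) k := by
  unfold walk
  rw [List.ofFn_succ, List.prod_cons]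
  congr 1

def padW (n : ℕ) (w : Fin n → ↥S₀) : ℕ → ↥S₀ := fun i =>
  if h : i < n then w ⟨i, h⟩ else ⟨Equiv.swap 0 1, by decide⟩

lemma padW_eq (n : ℕ) (w : Fin n → ↥S₀) (i : ℕ) (h : i < n) : padW n w i = w ⟨i, h⟩ := by
  simp [padW, h]

-- the cons decomposition of the avoiding condition
lemma cons_cond {g : G4} (hg : g ≠ 1) (n : ℕ) (s : ↥S₀) (w : Fin n → ↥S₀) :
    (∀ k ≤ n+1, walk S₀ (padW (n+1) (Fin.cons s w)) k ≠ g) ↔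
      (∀ k ≤ n, walk S₀ (padW n w) k ≠ (s : G4)⁻¹ * g) := by
  have hzero : padW (n+1) (Fin.cons s w) 0 = s := by
    rw [padW_eq (n+1) _ 0 (Nat.succ_pos n)]
    exact Fin.cons_zero _ _
  have hwalk : ∀ k ≤ n,
      walk S₀ (padW (n+1) (Fin.cons s w)) (k+1) = (s : G4) * walk S₀ (padW n w) k := by
    intro k hk
    rw [walk_succ_left, hzero]
    congr 1
    refine walk_congr S₀ fun i hik => ?_
    have hin : i < n := lt_of_lt_of_le hik hk
    rw [padW_eq n w i hin, padW_eq (n+1) _ (i+1) (Nat.succ_lt_succ hin)]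
    exact Fin.cons_succ (α := fun _ => (↥S₀ : Type)) s w ⟨i, hin⟩
  constructor
  · intro h k hk
    have := h (k+1) (Nat.succ_le_succ hk)
    rw [hwalk k hk] at this
    intro hcon
    exact this (by rw [hcon, mul_inv_cancel_left])
  · intro h k hk
    match k with
    | 0 => rw [walk_zero]; exact fun he => hg he.symm
    | j+1 =>
        have hj : j ≤ n := Nat.le_of_succ_le_succ hk
        rw [hwalk j hj]
        intro hcon
        exact h j hj (by rw [← hcon, inv_mul_cancel_left])

lemma count_eq (n : ℕ) (g : G4) :
    (Finset.univ.filter fun w : Fin n → ↥S₀ =>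
      ∀ k ≤ n, walk S₀ (padW n w) k ≠ g).card = A n g := by
  induction n generalizing g with
  | zero =>
      by_cases hg : g = 1
      · subst hg
        rw [show A 0 1 = 0 from rfl]
        rw [Finset.filter_false_of_mem, Finset.card_empty]
        intro w _
        push_neg
        exact ⟨0, le_refl 0, walk_zero S₀ _⟩
      · rw [A_zero hg, Finset.filter_true_of_mem, Finset.card_univ]
        · exact Fintype.card_unique
        · intro w _ k hk
          interval_cases k
          rw [walk_zero]
          exact fun he => hg he.symm
  | succ n ih =>
      by_cases hg : g = 1
      · subst hg
        rw [show ∀ m, A m 1 = 0 from fun m => by cases m <;> simp [A]]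
        rw [Finset.filter_false_of_mem, Finset.card_empty]
        intro w _
        push_neg
        exact ⟨0, Nat.zero_le _, walk_zero S₀ _⟩
      · rw [A_succ hg, ← Finset.sum_coe_sort S₀ (fun s => A n (s⁻¹ * g))]
        rw [Finset.card_eq_sum_card_fiberwise
          (f := fun w : Fin (n+1) → ↥S₀ => w 0) (t := Finset.univ)
          (fun w _ => Finset.mem_univ (w 0))]
        refine Finset.sum_congr rfl fun s _ => ?_
        rw [Finset.filter_filter]
        rw [← ih ((s : G4)⁻¹ * g)]
        refine Finset.card_bij' (fun w _ => Fin.tail w) (fun w' _ => Fin.cons s w') ?_ ?_ ?_ ?_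
        · intro w hw
          rw [Finset.mem_filter] at hw ⊢
          refine ⟨Finset.mem_univ _, ?_⟩
          have hP : ∀ k ≤ n+1, walk S₀ (padW (n+1) (Fin.cons s (Fin.tail w))) k ≠ g := by
            rw [← hw.2.2, Fin.cons_self_tail]
            exact hw.2.1
          exact (cons_cond hg n s (Fin.tail w)).mp hP
        · intro w' hw'
          rw [Finset.mem_filter] at hw' ⊢
          exact ⟨Finset.mem_univ _,
            (cons_cond hg n s w').mpr hw'.2, Fin.cons_zero _ _⟩
        · intro w hw
          rw [Finset.mem_filter] at hw
          have hct := Fin.cons_self_tail (α := fun _ => (↥S₀ : Type)) w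
          rw [hw.2.2] at hct
          exact hct
        · intro w' _
          exact Fin.tail_cons (α := fun _ => (↥S₀ : Type)) (x := s) (p := w')

-- ### cylinder sets

lemma cyl_measurable (n : ℕ) (P : (Fin n → ↥S₀) → Prop) :
    MeasurableSet {ω : ℕ → ↥S₀ | P (fun i => ω (i : ℕ))} := by
  have : {ω : ℕ → ↥S₀ | P (fun i => ω (i : ℕ))}
      = (fun (ω : ℕ → ↥S₀) (i : Fin n) => ω (i : ℕ)) ⁻¹' {v | P v} := rfl
  rw [this]
  refine measurable_pi_lambda _ (fun i => measurable_pi_apply _) ?_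
  -- every subset of the finite discrete space `Fin n → ↥S₀` is measurable
  have hsing : ∀ v : Fin n → ↥S₀, MeasurableSet {v} := by
    intro v
    have : ({v} : Set (Fin n → ↥S₀)) = ⋂ i, (fun u : Fin n → ↥S₀ => u i) ⁻¹' {v i} := by
      ext u
      simp [funext_iff]
    rw [this]
    exact MeasurableSet.iInter fun i =>
      measurable_pi_apply _ (MeasurableSpace.measurableSet_top)
  have : {v | P v} = ⋃ v ∈ {v | P v}, ({v} : Set (Fin n → ↥S₀)) := by
    ext u
    simp
  rw [this]
  exact MeasurableSet.biUnion (Set.to_countable _) fun v _ => hsing v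

lemma meas_cyl (μ : Measure (ℕ → ↥S₀)) (hμ : IsUniformProductMeasure S₀ μ)
    (n : ℕ) (P : (Fin n → ↥S₀) → Prop) [DecidablePred P] :
    μ {ω | P (fun i => ω (i : ℕ))} = (Finset.univ.filter P).card * (3 : ℝ≥0∞)⁻¹ ^ n := by
  have hcard : ((S₀.card : ℝ≥0∞))⁻¹ = (3 : ℝ≥0∞)⁻¹ := by
    norm_num [show S₀.card = 3 from rfl]
  have hset : {ω : ℕ → ↥S₀ | P (fun i => ω (i : ℕ))}
      = ⋃ w ∈ Finset.univ.filter P, {ω : ℕ → ↥S₀ | ∀ i : Fin n, ω (i : ℕ) = w i} := by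
    ext ω
    simp only [Set.mem_setOf_eq, Set.mem_iUnion, Finset.mem_filter, Finset.mem_univ, true_and]
    constructor
    · intro h
      exact ⟨fun i => ω (i : ℕ), h, fun i => rfl⟩
    · rintro ⟨w, hw, he⟩
      have : (fun i : Fin n => ω (i : ℕ)) = w := funext he
      rwa [this]
  rw [hset, measure_biUnion_finset]
  · rw [Finset.sum_congr rfl fun w _ => hμ.2 n w]
    rw [Finset.sum_const, nsmul_eq_mul, hcard]
  · intro w hw w' hw' hne
    simp only [Function.onFun]
    rw [Set.disjoint_left]
    intro ω h1 h2
    exact hne (funext fun i => ((h1 i).symm.trans (h2 i)))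
  · intro w _
    exact cyl_measurable n (fun v => ∀ i : Fin n, v i = w i)

-- ### the event {τ > n}

lemma event_eq (x y : G4) (n : ℕ) :
    {ω : ℕ → ↥S₀ | (n : ℕ∞) < tauFrom S₀ x y ω}
      = {ω : ℕ → ↥S₀ | (fun w : Fin n → ↥S₀ =>
          ∀ k ≤ n, walk S₀ (padW n w) k ≠ x⁻¹ * y) (fun i => ω (i : ℕ))} := by
  ext ω
  simp only [Set.mem_setOf_eq]
  have hwalk : ∀ k ≤ n, walk S₀ (padW n (fun i : Fin n => ω (i : ℕ))) k = walk S₀ ω k := by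
    intro k hk
    refine walk_congr S₀ fun i hik => ?_
    rw [padW_eq n _ i (lt_of_lt_of_le hik hk)]
  constructor
  · intro hlt k hk
    rw [hwalk k hk]
    intro hcon
    have hmem : (k : ℕ∞) ∈ (Nat.cast : ℕ → ℕ∞) '' {m : ℕ | x * walk S₀ ω m = y} :=
      ⟨k, by rw [Set.mem_setOf_eq, hcon, mul_inv_cancel_left], rfl⟩
    have hle : tauFrom S₀ x y ω ≤ (k : ℕ∞) := sInf_le hmem
    have : (n : ℕ∞) < (k : ℕ∞) := lt_of_lt_of_le hlt hle
    exact absurd (Nat.cast_lt.mp this) (not_lt.mpr hk)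
  · intro h
    have hge : ((n+1 : ℕ) : ℕ∞) ≤ tauFrom S₀ x y ω := by
      refine le_sInf ?_
      rintro b ⟨m, hm, rfl⟩
      rw [Set.mem_setOf_eq] at hm
      have hwm : walk S₀ ω m = x⁻¹ * y := by rw [← hm, inv_mul_cancel_left]
      have hmn : n < m := by
        by_contra hle
        push_neg at hle
        have := h m hle
        rw [hwalk m hle] at this
        exact this hwm
      exact_mod_cast Nat.cast_le.mpr hmn
    calc (n : ℕ∞) < ((n+1 : ℕ) : ℕ∞) := by exact_mod_cast Nat.lt_succ_self n
      _ ≤ _ := hge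

lemma enat_coe_eq_tsum (m : ℕ∞) :
    (m : ℝ≥0∞) = ∑' n : ℕ, (if (n : ℕ∞) < m then (1:ℝ≥0∞) else 0) := by
  cases m with
  | top =>
      rw [ENat.toENNReal_top]
      have : ∀ n : ℕ, (if ((n : ℕ∞) < ⊤) then (1:ℝ≥0∞) else 0) = 1 := fun n =>
        if_pos (lt_top_iff_ne_top.mpr (ENat.coe_ne_top n))
      rw [tsum_congr this]
      exact (ENNReal.tsum_const_eq_top_of_ne_zero one_ne_zero).symm
  | coe k =>
      rw [ENat.toENNReal_coe]
      rw [tsum_eq_sum (s := Finset.range k)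
        (fun n hn => if_neg (fun hlt => hn (Finset.mem_range.mpr (Nat.cast_lt.mp hlt))))]
      rw [Finset.sum_congr rfl fun n hn => if_pos (Nat.cast_lt.mpr (Finset.mem_range.mp hn))]
      rw [Finset.sum_const, Finset.card_range, nsmul_eq_mul, mul_one]

lemma meas_event (μ : Measure (ℕ → ↥S₀)) (hμ : IsUniformProductMeasure S₀ μ)
    (x y : G4) (n : ℕ) :
    μ {ω | (n : ℕ∞) < tauFrom S₀ x y ω} = (A n (x⁻¹ * y) : ℝ≥0∞) * (3 : ℝ≥0∞)⁻¹ ^ n := by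
  rw [event_eq x y n]
  rw [← count_eq n (x⁻¹ * y)]
  exact meas_cyl μ hμ n (fun w : Fin n → ↥S₀ => ∀ k ≤ n, walk S₀ (padW n w) k ≠ x⁻¹ * y)

lemma event_measurable (x y : G4) (n : ℕ) :
    MeasurableSet {ω : ℕ → ↥S₀ | (n : ℕ∞) < tauFrom S₀ x y ω} := by
  rw [event_eq x y n]
  exact cyl_measurable n (fun w : Fin n → ↥S₀ => ∀ k ≤ n, walk S₀ (padW n w) k ≠ x⁻¹ * y)

lemma mfpt_eq (μ : Measure (ℕ → ↥S₀)) (hμ : IsUniformProductMeasure S₀ μ) (x y : G4) :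
    mfptFrom S₀ μ x y = ∑' n : ℕ, (A n (x⁻¹ * y) : ℝ≥0∞) * (3 : ℝ≥0∞)⁻¹ ^ n := by
  have hpt : ∀ ω : ℕ → ↥S₀, ((tauFrom S₀ x y ω : ℕ∞) : ℝ≥0∞)
      = ∑' n : ℕ, Set.indicator {ω' : ℕ → ↥S₀ | (n : ℕ∞) < tauFrom S₀ x y ω'}
          (fun _ => (1:ℝ≥0∞)) ω := by
    intro ω
    rw [enat_coe_eq_tsum]
    refine tsum_congr fun n => ?_
    rw [Set.indicator_apply]
    rfl
  calc mfptFrom S₀ μ x y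
      = ∫⁻ ω, ∑' n : ℕ, Set.indicator {ω' : ℕ → ↥S₀ | (n : ℕ∞) < tauFrom S₀ x y ω'}
          (fun _ => (1:ℝ≥0∞)) ω ∂μ := lintegral_congr hpt
    _ = ∑' n : ℕ, ∫⁻ ω, Set.indicator {ω' : ℕ → ↥S₀ | (n : ℕ∞) < tauFrom S₀ x y ω'}
          (fun _ => (1:ℝ≥0∞)) ω ∂μ :=
        lintegral_tsum fun n =>
          ((measurable_const.indicator (event_measurable x y n)).aemeasurable)
    _ = ∑' n : ℕ, μ {ω : ℕ → ↥S₀ | (n : ℕ∞) < tauFrom S₀ x y ω} :=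
        tsum_congr fun n => lintegral_indicator_one (event_measurable x y n)
    _ = ∑' n : ℕ, (A n (x⁻¹ * y) : ℝ≥0∞) * (3 : ℝ≥0∞)⁻¹ ^ n :=
        tsum_congr fun n => meas_event μ hμ x y n

end MFPTAux

open MFPTAux in
/-- for the symmetric group on `{1,2,3,4}` with the standard Coxeter
(lineal) generating set `S = {(1 2), (2 3), (3 4)}`, the mean first passage times to the
longest word `w₀ = (1 4)(2 3)` are `1296/28` from the identity, `1273/28` from `(1 2)`
and `682/28` from `(1 4)`. -/
theorem mfpt_S4_coxeter
    (S : Finset (Equiv.Perm (Fin 4)))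
    (hS : S = {Equiv.swap 0 1, Equiv.swap 1 2, Equiv.swap 2 3})
    (μ : Measure (ℕ → S)) (hμ : IsUniformProductMeasure S μ) :
    mfptFrom S μ 1 (Equiv.swap 0 3 * Equiv.swap 1 2) = 1296 / 28 ∧
    mfptFrom S μ (Equiv.swap 0 1) (Equiv.swap 0 3 * Equiv.swap 1 2) = 1273 / 28 ∧
    mfptFrom S μ (Equiv.swap 0 3) (Equiv.swap 0 3 * Equiv.swap 1 2) = 682 / 28 := by
  subst hS
  refine ⟨?_, ?_, ?_⟩
  · show mfptFrom S₀ μ 1 (Equiv.swap 0 3 * Equiv.swap 1 2) = 1296 / 28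
    rw [mfpt_eq μ hμ 1 (Equiv.swap 0 3 * Equiv.swap 1 2), series_eq]
    show (mval (1⁻¹ * (Equiv.swap 0 3 * Equiv.swap 1 2)) : ℝ≥0∞) * 28⁻¹ = 1296 / 28
    rw [show mval (1⁻¹ * (Equiv.swap 0 3 * Equiv.swap 1 2)) = 1296 from by decide]
    rw [div_eq_mul_inv]
    norm_num
  · show mfptFrom S₀ μ (Equiv.swap 0 1) (Equiv.swap 0 3 * Equiv.swap 1 2) = 1273 / 28
    rw [mfpt_eq μ hμ (Equiv.swap 0 1) (Equiv.swap 0 3 * Equiv.swap 1 2), series_eq]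
    show (mval ((Equiv.swap 0 1)⁻¹ * (Equiv.swap 0 3 * Equiv.swap 1 2)) : ℝ≥0∞) * 28⁻¹
      = 1273 / 28
    rw [show mval ((Equiv.swap 0 1)⁻¹ * (Equiv.swap 0 3 * Equiv.swap 1 2)) = 1273 from by decide]
    rw [div_eq_mul_inv]
    norm_num
  · show mfptFrom S₀ μ (Equiv.swap 0 3) (Equiv.swap 0 3 * Equiv.swap 1 2) = 682 / 28
    rw [mfpt_eq μ hμ (Equiv.swap 0 3) (Equiv.swap 0 3 * Equiv.swap 1 2), series_eq]
    show (mval ((Equiv.swap 0 3)⁻¹ * (Equiv.swap 0 3 * Equiv.swap 1 2)) : ℝ≥0∞) * 28⁻¹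
      = 682 / 28
    rw [show mval ((Equiv.swap 0 3)⁻¹ * (Equiv.swap 0 3 * Equiv.swap 1 2)) = 682 from by decide]
    rw [div_eq_mul_inv]
    norm_num
end

section
/- Let G be the symmetric group on {1,2,3,4} and S = {(1 2), (2 3), (3 4), (1 4)} the circular generating set. Then the mean first passage times to the longest word w₀ = (1 3)(2 4) satisfy: from the identity, d(1 → w₀) = 32; from (1 2), d((1 2) → w₀) = 31; from (1 2 3), d((1 2 3) → w₀) = 30; from (1 2)(3 4), d((1 2)(3 4) → w₀) = 28; and from (1 2 4 3), d((1 2 4 3) → w₀) = 23. -/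
open MeasureTheory
open scoped ENNReal

set_option linter.unusedSectionVars false
set_option maxHeartbeats 1000000
set_option maxRecDepth 100000

section Generic

variable {G : Type*} [Group G] [DecidableEq G] (S : Finset G) (y : G)

def pref {n : ℕ} (w : Fin n → S) (k : ℕ) (hk : k ≤ n) : G :=
  (List.ofFn fun i : Fin k => ((w (Fin.castLE hk i)) : G)).prod

def AFin (x : G) (n : ℕ) : Finset (Fin n → S) :=
  Finset.univ.filter fun w => ∀ k, (hk : k ≤ n) → x * pref S w k hk ≠ y

lemma mem_AFin {x : G} {n : ℕ} {w : Fin n → S} :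
    w ∈ AFin S y x n ↔ ∀ k, (hk : k ≤ n) → x * pref S w k hk ≠ y := by
  simp [AFin]

lemma pref_zero {n : ℕ} (w : Fin n → S) (h : 0 ≤ n) : pref S w 0 h = 1 := by
  simp [pref]

lemma pref_walk (ω : ℕ → S) {k n : ℕ} (hk : k ≤ n) :
    pref S (fun i : Fin n => ω (i : ℕ)) k hk = walk S ω k := rfl

lemma pref_succ {n k : ℕ} (hk : k ≤ n) (w : Fin (n+1) → S) :
    pref S w (k+1) (Nat.succ_le_succ hk) = (w 0 : G) * pref S (Fin.tail w) k hk := by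
  unfold pref
  rw [List.ofFn_succ, List.prod_cons]
  rfl

lemma pref_restrict {m n k : ℕ} (w : Fin (m+n) → S) (hk : k ≤ m) :
    pref S (fun i : Fin m => w (Fin.castAdd n i)) k hk
      = pref S w k (hk.trans (Nat.le_add_right m n)) := rfl

lemma pref_split {m n : ℕ} (w : Fin (m+n) → S) {k : ℕ} (hk : k ≤ n) :
    pref S w (m+k) (Nat.add_le_add_left hk m) =
      pref S w m (Nat.le_add_right m n) *
        pref S (fun i : Fin n => w (Fin.natAdd m i)) k hk := by
  unfold pref
  rw [← List.prod_append]
  congr 1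
  rw [List.ofFn_add (f := fun i : Fin (m+k) =>
    ((w (Fin.castLE (Nat.add_le_add_left hk m) i)) : G))]
  rfl

lemma lt_tauFrom_iff (x : G) (ω : ℕ → S) (n : ℕ) :
    (n : ℕ∞) < tauFrom S x y ω ↔ ∀ k, k ≤ n → x * walk S ω k ≠ y := by
  constructor
  · intro h k hk hxy
    have h1 : tauFrom S x y ω ≤ (k : ℕ∞) := sInf_le ⟨k, hxy, rfl⟩
    have h2 : ((k : ℕ) : ℕ∞) ≤ (n : ℕ∞) := Nat.cast_le.2 hk
    exact absurd ((h.trans_le h1).trans_le h2) (lt_irrefl _)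
  · intro h
    have h1 : ((n : ℕ) : ℕ∞) < ((n+1 : ℕ) : ℕ∞) := by
      exact_mod_cast Nat.lt_succ_self n
    refine h1.trans_le (le_sInf ?_)
    rintro b ⟨k, hky, rfl⟩
    have : n < k := by
      by_contra hc
      exact h k (Nat.le_of_not_lt hc) hky
    exact_mod_cast this


lemma measurableSet_coord (i : ℕ) (c : S) :
    MeasurableSet {ω : ℕ → S | ω i = c} := by
  have h : {ω : ℕ → S | ω i = c} = (fun ω : ℕ → S => ω i) ⁻¹' {c} := rfl
  rw [h]
  exact measurable_pi_apply i MeasurableSpace.measurableSet_top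

lemma measurableSet_cyl (n : ℕ) (B : Finset (Fin n → S)) :
    MeasurableSet {ω : ℕ → S | (fun i : Fin n => ω (i : ℕ)) ∈ B} := by
  have h : {ω : ℕ → S | (fun i : Fin n => ω (i : ℕ)) ∈ B}
      = ⋃ w ∈ B, ⋂ i : Fin n, {ω : ℕ → S | ω (i : ℕ) = w i} := by
    ext ω
    simp only [Set.mem_setOf_eq, Set.mem_iUnion, Set.mem_iInter, Set.mem_setOf_eq]
    constructor
    · intro hB
      exact ⟨_, hB, fun i => rfl⟩
    · rintro ⟨w, hw, hwi⟩
      have : (fun i : Fin n => ω (i : ℕ)) = w := funext hwi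
      rwa [this]
  rw [h]
  exact MeasurableSet.biUnion B.countable_toSet fun w _ =>
    MeasurableSet.iInter fun i => measurableSet_coord S (i : ℕ) (w i)

lemma meas_restrict_mem {μ : Measure (ℕ → S)} (hμ : IsUniformProductMeasure S μ)
    (n : ℕ) (B : Finset (Fin n → S)) :
    μ {ω : ℕ → S | (fun i : Fin n => ω (i : ℕ)) ∈ B}
      = B.card * ((S.card : ℝ≥0∞))⁻¹ ^ n := by
  have hset : {ω : ℕ → S | (fun i : Fin n => ω (i : ℕ)) ∈ B}
      = ⋃ w ∈ B, {ω : ℕ → S | ∀ i : Fin n, ω (i : ℕ) = w i} := by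
    ext ω
    simp only [Set.mem_setOf_eq, Set.mem_iUnion]
    constructor
    · intro hB
      exact ⟨_, hB, fun i => rfl⟩
    · rintro ⟨w, hw, hwi⟩
      have : (fun i : Fin n => ω (i : ℕ)) = w := funext hwi
      rwa [this]
  rw [hset, measure_biUnion_finset ?disj ?meas]
  · rw [Finset.sum_congr rfl (fun w _ => hμ.2 n w), Finset.sum_const, nsmul_eq_mul]
  case disj =>
    rintro w _ w' _ hne
    simp only [Function.onFun, Set.disjoint_left, Set.mem_setOf_eq]
    intro ω h1 h2
    exact hne (funext fun i => (h1 i).symm.trans (h2 i))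
  case meas =>
    intro w _
    have : {ω : ℕ → S | ∀ i : Fin n, ω (i : ℕ) = w i}
        = ⋂ i : Fin n, {ω : ℕ → S | ω (i : ℕ) = w i} := by
      ext ω; simp
    rw [this]
    exact MeasurableSet.iInter fun i => measurableSet_coord S (i : ℕ) (w i)

lemma event_eq (x : G) (n : ℕ) :
    {ω : ℕ → S | (n : ℕ∞) < tauFrom S x y ω}
      = {ω : ℕ → S | (fun i : Fin n => ω (i : ℕ)) ∈ AFin S y x n} := by
  ext ω
  rw [Set.mem_setOf_eq, Set.mem_setOf_eq, lt_tauFrom_iff, mem_AFin]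
  constructor
  · intro h k hk
    rw [pref_walk]
    exact h k hk
  · intro h k hk
    rw [← pref_walk S (ω := ω) (n := n) hk]
    exact h k hk

lemma enat_eq_tsum (m : ℕ∞) :
    (m : ℝ≥0∞) = ∑' n : ℕ, if (n : ℕ∞) < m then 1 else 0 := by
  induction m using ENat.recTopCoe with
  | top =>
    have h : ∀ n : ℕ, (if ((n : ℕ∞)) < (⊤ : ℕ∞) then (1:ℝ≥0∞) else 0) = 1 := fun n =>
      if_pos (lt_of_le_of_ne le_top (ENat.coe_ne_top n))
    rw [tsum_congr h, ENNReal.tsum_const_eq_top_of_ne_zero one_ne_zero]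
    simp
  | coe k =>
    have h : ∀ n : ℕ, (if ((n : ℕ∞)) < ((k : ℕ) : ℕ∞) then (1:ℝ≥0∞) else 0)
        = if n < k then 1 else 0 := fun n => by
      by_cases hnk : n < k
      · rw [if_pos (Nat.cast_lt.2 hnk), if_pos hnk]
      · rw [if_neg (fun hc => hnk (Nat.cast_lt.1 hc)), if_neg hnk]
    rw [tsum_congr h, tsum_eq_sum (s := Finset.range k)
      (fun n hn => if_neg (by simpa using hn))]
    rw [Finset.sum_congr rfl (fun n hn => if_pos (Finset.mem_range.1 hn))]
    simp

lemma mfptFrom_eq_tsum {μ : Measure (ℕ → S)} (hμ : IsUniformProductMeasure S μ)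
    (x : G) :
    mfptFrom S μ x y
      = ∑' n : ℕ, ((AFin S y x n).card : ℝ≥0∞) * ((S.card : ℝ≥0∞))⁻¹ ^ n := by
  unfold mfptFrom
  have hmeas : ∀ n : ℕ, MeasurableSet {ω : ℕ → S | (n : ℕ∞) < tauFrom S x y ω} := by
    intro n
    rw [event_eq]
    exact measurableSet_cyl S n _
  have h1 : ∀ ω : ℕ → S, ((tauFrom S x y ω : ℕ∞) : ℝ≥0∞)
      = ∑' n : ℕ, ({ω' : ℕ → S | (n : ℕ∞) < tauFrom S x y ω'}.indicator
          (fun _ => (1:ℝ≥0∞)) ω) := by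
    intro ω
    rw [enat_eq_tsum]
    refine tsum_congr fun n => ?_
    rw [Set.indicator_apply]
    simp only [Set.mem_setOf_eq]
  rw [lintegral_congr h1, lintegral_tsum
    (fun n => ((measurable_const.indicator (hmeas n)).aemeasurable))]
  refine tsum_congr fun n => ?_
  rw [lintegral_indicator_const (hmeas n), one_mul, event_eq]
  exact meas_restrict_mem S hμ n _

lemma AFin_eq_empty_of_eq {n : ℕ} : AFin S y y n = ∅ := by
  refine Finset.eq_empty_of_forall_notMem fun w hw => ?_
  have := (mem_AFin S y).1 hw 0 (Nat.zero_le n)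
  rw [pref_zero, mul_one] at this
  exact this rfl

lemma card_AFin_zero (x : G) :
    (AFin S y x 0).card = if x = y then 0 else 1 := by
  rcases eq_or_ne x y with rfl | hxy
  · rw [if_pos rfl, AFin_eq_empty_of_eq, Finset.card_empty]
  · rw [if_neg hxy]
    have huniv : AFin S y x 0 = Finset.univ := by
      refine Finset.eq_univ_of_forall fun w => (mem_AFin S y).2 fun k hk => ?_
      interval_cases k
      rw [pref_zero, mul_one]
      exact hxy
    rw [huniv, Finset.card_univ]
    simp

lemma mem_AFin_succ_iff {x : G} {n : ℕ} {w : Fin (n+1) → S} :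
    w ∈ AFin S y x (n+1) ↔ x ≠ y ∧ Fin.tail w ∈ AFin S y (x * (w 0 : G)) n := by
  rw [mem_AFin, mem_AFin]
  constructor
  · intro h
    constructor
    · have h0 := h 0 (Nat.zero_le _)
      rwa [pref_zero, mul_one] at h0
    · intro k hk
      have hh := h (k+1) (Nat.succ_le_succ hk)
      rwa [pref_succ S hk, ← mul_assoc] at hh
  · rintro ⟨h0, h⟩ k hk
    match k, hk with
    | 0, hk =>
      rw [pref_zero, mul_one]
      exact h0
    | k+1, hk =>
      have hk' : k ≤ n := Nat.succ_le_succ_iff.mp hk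
      rw [show pref S w (k+1) hk = pref S w (k+1) (Nat.succ_le_succ hk') from rfl,
        pref_succ S hk', ← mul_assoc]
      exact h k hk'

lemma card_AFin_succ (x : G) (n : ℕ) :
    (AFin S y x (n+1)).card
      = if x = y then 0 else ∑ s : S, (AFin S y (x * (s : G)) n).card := by
  rcases eq_or_ne x y with rfl | hxy
  · rw [if_pos rfl, AFin_eq_empty_of_eq, Finset.card_empty]
  · rw [if_neg hxy]
    rw [Finset.card_eq_sum_card_fiberwise
      (f := fun w : Fin (n+1) → S => w 0) (t := Finset.univ)
      (fun w _ => Finset.mem_univ _)]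
    refine Finset.sum_congr rfl fun s _ => ?_
    refine Finset.card_bij' (fun w _ => Fin.tail w) (fun v _ => Fin.cons s v)
      ?_ ?_ ?_ ?_
    · intro w hw
      rw [Finset.mem_filter] at hw
      obtain ⟨hw1, hw0⟩ := hw
      have := ((mem_AFin_succ_iff S y).1 hw1).2
      rwa [hw0] at this
    · intro v hv
      rw [Finset.mem_filter]
      have hc0 : (Fin.cons s v : Fin (n+1) → S) 0 = s := by simp
      have hct : Fin.tail (Fin.cons s v : Fin (n+1) → S) = v := by
        funext i; simp [Fin.tail]
      refine ⟨(mem_AFin_succ_iff S y).2 ⟨hxy, ?_⟩, hc0⟩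
      show Fin.tail (Fin.cons s v : Fin (n+1) → S)
        ∈ AFin S y (x * ((Fin.cons s v : Fin (n+1) → S) 0 : G)) n
      rw [hct, hc0]
      exact hv
    · intro w hw
      rw [Finset.mem_filter] at hw
      show (Fin.cons s (Fin.tail w) : Fin (n+1) → S) = w
      rw [← hw.2]
      exact Fin.cons_self_tail w
    · intro v _
      show Fin.tail (Fin.cons s v : Fin (n+1) → S) = v
      funext i; simp [Fin.tail]

lemma card_AFin_add_le [Fintype G] (x : G) (m n : ℕ) :
    (AFin S y x (m+n)).card
      ≤ (AFin S y x m).card * Finset.univ.sup (fun z : G => (AFin S y z n).card) := by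
  set M := Finset.univ.sup (fun z : G => (AFin S y z n).card) with hM
  have hmap : ∀ w ∈ AFin S y x (m+n),
      (fun i : Fin m => w (Fin.castAdd n i)) ∈ AFin S y x m := by
    intro w hw
    refine (mem_AFin S y).2 fun k hk => ?_
    rw [pref_restrict]
    exact (mem_AFin S y).1 hw k (hk.trans (Nat.le_add_right m n))
  rw [Finset.card_eq_sum_card_fiberwise hmap]
  have hfiber : ∀ v ∈ AFin S y x m,
      ((AFin S y x (m+n)).filter
        (fun w => (fun i : Fin m => w (Fin.castAdd n i)) = v)).card ≤ M := by
    intro v hv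
    have hle : ((AFin S y x (m+n)).filter
        (fun w => (fun i : Fin m => w (Fin.castAdd n i)) = v)).card
        ≤ (AFin S y (x * pref S v m le_rfl) n).card := by
      refine Finset.card_le_card_of_injOn
        (fun w => fun i : Fin n => w (Fin.natAdd m i)) ?_ ?_
      · intro w hw
        rw [Finset.mem_coe, Finset.mem_filter] at hw
        obtain ⟨hw1, hw2⟩ := hw
        refine (mem_AFin S y).2 fun k hk => ?_
        have hkey := (mem_AFin S y).1 hw1 (m+k) (Nat.add_le_add_left hk m)
        rw [pref_split S w hk] at hkey
        have hpv : pref S w m (Nat.le_add_right m n) = pref S v m le_rfl := by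
          rw [← hw2, pref_restrict]
        rw [hpv, ← mul_assoc] at hkey
        exact hkey
      · intro w hw w' hw' heq
        simp only [Finset.coe_filter, Set.mem_setOf_eq] at hw hw'
        funext j
        refine Fin.addCases (fun i => ?_) (fun i => ?_) j
        · have h1 := congrFun hw.2 i
          have h2 := congrFun hw'.2 i
          rw [h1, h2]
        · exact congrFun heq i
    exact hle.trans (Finset.le_sup (f := fun z : G => (AFin S y z n).card)
      (Finset.mem_univ (x * pref S v m le_rfl)))
  calc ∑ v ∈ AFin S y x m, ((AFin S y x (m+n)).filter
        (fun w => (fun i : Fin m => w (Fin.castAdd n i)) = v)).card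
      ≤ ∑ _v ∈ AFin S y x m, M := Finset.sum_le_sum hfiber
    _ = (AFin S y x m).card * M := by rw [Finset.sum_const, smul_eq_mul]

end Generic

section S4

set_option maxRecDepth 100000

abbrev P4 := Equiv.Perm (Fin 4)

def S0 : Finset P4 :=
  {Equiv.swap 0 1, Equiv.swap 1 2, Equiv.swap 2 3, Equiv.swap 0 3}

def y0 : P4 := Equiv.swap 0 2 * Equiv.swap 1 3

lemma card_S0 : S0.card = 4 := by decide

def sa : S0 := ⟨Equiv.swap 0 1, by decide⟩
def sb : S0 := ⟨Equiv.swap 1 2, by decide⟩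
def sc : S0 := ⟨Equiv.swap 2 3, by decide⟩
def sd : S0 := ⟨Equiv.swap 0 3, by decide⟩

def L : List P4 :=
  [(1 : P4),
   (Equiv.swap 0 1),
   (Equiv.swap 1 2),
   (Equiv.swap 2 3),
   (Equiv.swap 0 3),
   (Equiv.swap 0 1 * Equiv.swap 1 2),
   (Equiv.swap 0 1 * Equiv.swap 2 3),
   (Equiv.swap 0 1 * Equiv.swap 0 3),
   (Equiv.swap 1 2 * Equiv.swap 0 1),
   (Equiv.swap 1 2 * Equiv.swap 2 3),
   (Equiv.swap 1 2 * Equiv.swap 0 3),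
   (Equiv.swap 2 3 * Equiv.swap 1 2),
   (Equiv.swap 2 3 * Equiv.swap 0 3),
   (Equiv.swap 0 3 * Equiv.swap 0 1),
   (Equiv.swap 0 3 * Equiv.swap 2 3),
   (Equiv.swap 0 1 * Equiv.swap 1 2 * Equiv.swap 0 1),
   (Equiv.swap 0 1 * Equiv.swap 1 2 * Equiv.swap 2 3),
   (Equiv.swap 0 1 * Equiv.swap 1 2 * Equiv.swap 0 3),
   (Equiv.swap 0 1 * Equiv.swap 2 3 * Equiv.swap 1 2),
   (Equiv.swap 0 1 * Equiv.swap 2 3 * Equiv.swap 0 3),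
   (Equiv.swap 0 1 * Equiv.swap 0 3 * Equiv.swap 0 1),
   (Equiv.swap 0 1 * Equiv.swap 0 3 * Equiv.swap 2 3),
   (Equiv.swap 1 2 * Equiv.swap 0 3 * Equiv.swap 0 1),
   (Equiv.swap 0 1 * Equiv.swap 1 2 * Equiv.swap 0 3 * Equiv.swap 0 1)]

lemma mem_L : ∀ x : P4, x ∈ L := by decide

def gv : ℕ → ℕ → ℕ → ℕ
  | 0, 1, 2 => 32
  | 1, 0, 2 => 31
  | 0, 2, 1 => 31
  | 0, 1, 3 => 31
  | 3, 1, 2 => 31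
  | 1, 2, 0 => 30
  | 1, 0, 3 => 28
  | 3, 0, 2 => 30
  | 2, 0, 1 => 30
  | 0, 2, 3 => 30
  | 3, 2, 1 => 28
  | 0, 3, 1 => 30
  | 2, 1, 3 => 30
  | 1, 3, 2 => 30
  | 3, 1, 0 => 30
  | 2, 1, 0 => 31
  | 1, 2, 3 => 31
  | 3, 2, 0 => 23
  | 1, 3, 0 => 23
  | 2, 0, 3 => 23
  | 0, 3, 2 => 31
  | 3, 0, 1 => 31
  | 2, 3, 1 => 23
  | 2, 3, 0 => 0
  | _, _, _ => 0

def gfun (x : P4) : ℕ := gv (x 0) (x 1) (x 2)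

lemma hg_y0 : gfun y0 = 0 := by decide

lemma hg_le (x : P4) : gfun x ≤ 32 := by
  have hx := mem_L x
  unfold L at hx
  fin_cases hx <;> decide

lemma hg_eq (x : P4) (hx : x ≠ y0) : 4 * gfun x = 4 + ∑ s ∈ S0, gfun (x * s) := by
  have h := mem_L x
  unfold L at h
  fin_cases h <;> first
    | decide
    | (exact absurd (by decide) hx)

lemma not_mem_helper {x : P4} {w : Fin 4 → S0} (k : ℕ) (hk : k ≤ 4)
    (h : x * pref S0 w k hk = y0) : w ∉ AFin S0 y0 x 4 :=
  fun hw => (mem_AFin S0 y0).1 hw k hk h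

lemma exists_not_mem_AFin4 (x : P4) : ∃ w : Fin 4 → S0, w ∉ AFin S0 y0 x 4 := by
  have hx := mem_L x
  unfold L at hx
  fin_cases hx
  · exact ⟨![sa, sb, sd, sa], not_mem_helper (k := 4) (by norm_num) (by decide)⟩
  · exact ⟨![sb, sd, sa, sa], not_mem_helper (k := 3) (by norm_num) (by decide)⟩
  · exact ⟨![sa, sc, sb, sa], not_mem_helper (k := 3) (by norm_num) (by decide)⟩
  · exact ⟨![sa, sb, sd, sa], not_mem_helper (k := 3) (by norm_num) (by decide)⟩
  · exact ⟨![sa, sc, sd, sa], not_mem_helper (k := 3) (by norm_num) (by decide)⟩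
  · exact ⟨![sd, sa, sa, sa], not_mem_helper (k := 2) (by norm_num) (by decide)⟩
  · exact ⟨![sb, sd, sa, sa], not_mem_helper (k := 2) (by norm_num) (by decide)⟩
  · exact ⟨![sb, sa, sa, sa], not_mem_helper (k := 2) (by norm_num) (by decide)⟩
  · exact ⟨![sc, sb, sa, sa], not_mem_helper (k := 2) (by norm_num) (by decide)⟩
  · exact ⟨![sa, sb, sa, sa], not_mem_helper (k := 2) (by norm_num) (by decide)⟩
  · exact ⟨![sa, sc, sa, sa], not_mem_helper (k := 2) (by norm_num) (by decide)⟩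
  · exact ⟨![sd, sc, sa, sa], not_mem_helper (k := 2) (by norm_num) (by decide)⟩
  · exact ⟨![sb, sc, sa, sa], not_mem_helper (k := 2) (by norm_num) (by decide)⟩
  · exact ⟨![sc, sd, sa, sa], not_mem_helper (k := 2) (by norm_num) (by decide)⟩
  · exact ⟨![sa, sd, sa, sa], not_mem_helper (k := 2) (by norm_num) (by decide)⟩
  · exact ⟨![sa, sd, sa, sa], not_mem_helper (k := 3) (by norm_num) (by decide)⟩
  · exact ⟨![sa, sb, sc, sa], not_mem_helper (k := 3) (by norm_num) (by decide)⟩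
  · exact ⟨![sa, sa, sa, sa], not_mem_helper (k := 1) (by norm_num) (by decide)⟩
  · exact ⟨![sd, sa, sa, sa], not_mem_helper (k := 1) (by norm_num) (by decide)⟩
  · exact ⟨![sb, sa, sa, sa], not_mem_helper (k := 1) (by norm_num) (by decide)⟩
  · exact ⟨![sa, sb, sa, sa], not_mem_helper (k := 3) (by norm_num) (by decide)⟩
  · exact ⟨![sa, sd, sc, sa], not_mem_helper (k := 3) (by norm_num) (by decide)⟩
  · exact ⟨![sc, sa, sa, sa], not_mem_helper (k := 1) (by norm_num) (by decide)⟩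
  · exact ⟨![sa, sa, sa, sa], not_mem_helper (k := 0) (by norm_num) (by decide)⟩

end S4

section Analysis

open Filter Topology

lemma card_AFin4_le (x : P4) : (AFin S0 y0 x 4).card ≤ 255 := by
  obtain ⟨w, hw⟩ := exists_not_mem_AFin4 x
  have h1 : AFin S0 y0 x 4 ⊆ Finset.univ.erase w := by
    intro v hv
    exact Finset.mem_erase.2 ⟨fun hvw => hw (hvw ▸ hv), Finset.mem_univ v⟩
  have h2 := Finset.card_le_card h1
  rw [Finset.card_erase_of_mem (Finset.mem_univ w), Finset.card_univ] at h2
  have h3 : Fintype.card (Fin 4 → S0) = 256 := by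
    rw [Fintype.card_fun]
    rw [Fintype.card_coe, card_S0]
    simp
  omega

def Mx (n : ℕ) : ℕ := Finset.univ.sup (fun z : P4 => (AFin S0 y0 z n).card)

lemma Mx_zero : Mx 0 ≤ 1 := by
  refine Finset.sup_le fun z _ => ?_
  rw [card_AFin_zero]
  split <;> omega

lemma Mx_step (n : ℕ) : Mx (4 + n) ≤ 255 * Mx n := by
  refine Finset.sup_le fun z _ => ?_
  exact (card_AFin_add_le S0 y0 z 4 n).trans
    (Nat.mul_le_mul_right _ (card_AFin4_le z))

lemma Mx_pow : ∀ q : ℕ, Mx (4 * q) ≤ 255 ^ q := by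
  intro q
  induction q with
  | zero => simpa using Mx_zero
  | succ q ih =>
    have h : 4 * (q + 1) = 4 + 4 * q := by ring
    rw [h]
    calc Mx (4 + 4 * q) ≤ 255 * Mx (4 * q) := Mx_step _
      _ ≤ 255 * 255 ^ q := Nat.mul_le_mul_left _ ih
      _ = 255 ^ (q + 1) := by ring

noncomputable def ar (n : ℕ) (x : P4) : ℝ≥0∞ :=
  ((AFin S0 y0 x n).card : ℝ≥0∞) * (4 : ℝ≥0∞)⁻¹ ^ n

lemma ar_y0 (n : ℕ) : ar n y0 = 0 := by
  rw [ar, AFin_eq_empty_of_eq, Finset.card_empty]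
  simp

lemma ar_zero {x : P4} (hx : x ≠ y0) : ar 0 x = 1 := by
  rw [ar, card_AFin_zero, if_neg hx]
  simp

lemma ar_succ {x : P4} (hx : x ≠ y0) (n : ℕ) :
    ar (n+1) x = (∑ s : S0, ar n (x * s)) * 4⁻¹ := by
  unfold ar
  rw [card_AFin_succ, if_neg hx]
  push_cast
  simp only [Finset.sum_mul, pow_succ, mul_assoc]

lemma ar_pow_le (q : ℕ) (x : P4) : ar (4*q) x ≤ ((255 : ℝ≥0∞) / 256) ^ q := by
  have h1 : ((AFin S0 y0 x (4*q)).card : ℝ≥0∞) ≤ ((255 ^ q : ℕ) : ℝ≥0∞) := by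
    exact_mod_cast ((Finset.le_sup (f := fun z : P4 => (AFin S0 y0 z (4*q)).card)
      (Finset.mem_univ x)).trans (Mx_pow q))
  have h2 : ((4 : ℝ≥0∞)⁻¹) ^ (4 * q) = ((256 : ℝ≥0∞)⁻¹) ^ q := by
    rw [← ENNReal.inv_pow, pow_mul, ← ENNReal.inv_pow]
    norm_num
  calc ar (4*q) x ≤ ((255 ^ q : ℕ) : ℝ≥0∞) * (4 : ℝ≥0∞)⁻¹ ^ (4*q) :=
        mul_le_mul_left h1 _
    _ = ((255 : ℝ≥0∞) / 256) ^ q := by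
        rw [h2]
        push_cast
        rw [← mul_pow, ENNReal.div_eq_inv_mul, mul_comm]

noncomputable def PS (n : ℕ) (x : P4) : ℝ≥0∞ := ∑ k ∈ Finset.range n, ar k x

noncomputable def gE (x : P4) : ℝ≥0∞ := (gfun x : ℝ≥0∞)

lemma PS_y0 (n : ℕ) : PS n y0 = 0 :=
  Finset.sum_eq_zero fun k _ => ar_y0 k

lemma PS_succ {x : P4} (hx : x ≠ y0) (n : ℕ) :
    PS (n+1) x = 1 + (∑ s : S0, PS n (x * s)) * 4⁻¹ := by
  unfold PS
  rw [Finset.sum_range_succ']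
  rw [Finset.sum_congr rfl (fun k _ => ar_succ hx k), ar_zero hx]
  rw [← Finset.sum_mul, Finset.sum_comm]
  rw [add_comm]

lemma gE_eq {x : P4} (hx : x ≠ y0) :
    gE x = 1 + (∑ s : S0, gE (x * s)) * 4⁻¹ := by
  have h0 := hg_eq x hx
  have h4 : (4 : ℝ≥0∞) * gE x = 4 + ∑ s : S0, gE (x * (s : P4)) := by
    have hc := congrArg (Nat.cast : ℕ → ℝ≥0∞) h0
    push_cast at hc
    rw [Finset.sum_coe_sort S0 (fun t => gE (x * t))]
    exact hc
  have h44 : (4 : ℝ≥0∞)⁻¹ * 4 = 1 := ENNReal.inv_mul_cancel (by norm_num) (by norm_num)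
  calc gE x = (4⁻¹ * 4) * gE x := by rw [h44, one_mul]
    _ = 4⁻¹ * ((4 : ℝ≥0∞) * gE x) := by rw [mul_assoc]
    _ = 4⁻¹ * (4 + ∑ s : S0, gE (x * (s : P4))) := by rw [h4]
    _ = 1 + (∑ s : S0, gE (x * s)) * 4⁻¹ := by
        rw [mul_add, h44, mul_comm (4:ℝ≥0∞)⁻¹]

lemma PS_le_gE : ∀ n : ℕ, ∀ x : P4, PS n x ≤ gE x := by
  intro n
  induction n with
  | zero => intro x; simp [PS]
  | succ n ih =>
    intro x
    rcases eq_or_ne x y0 with rfl | hx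
    · rw [PS_y0]; exact zero_le
    · rw [PS_succ hx, gE_eq hx]
      gcongr with s hs
      exact ih (x * s)

lemma gE_le_PS : ∀ n : ℕ, ∀ x : P4, gE x ≤ PS n x + 32 * ar n x := by
  intro n
  induction n with
  | zero =>
    intro x
    rcases eq_or_ne x y0 with rfl | hx
    · rw [gE, hg_y0]; simp
    · rw [ar_zero hx]
      have : gE x ≤ 32 := by
        rw [gE]
        exact_mod_cast hg_le x
      calc gE x ≤ 32 := this
        _ ≤ PS 0 x + 32 * 1 := by simp
  | succ n ih =>
    intro x
    rcases eq_or_ne x y0 with rfl | hx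
    · rw [gE, hg_y0]; simp
    · calc gE x = 1 + (∑ s : S0, gE (x * s)) * 4⁻¹ := gE_eq hx
        _ ≤ 1 + (∑ s : S0, (PS n (x * s) + 32 * ar n (x * s))) * 4⁻¹ := by
            gcongr with s hs
            exact ih (x * s)
        _ = (1 + (∑ s : S0, PS n (x * s)) * 4⁻¹)
            + 32 * ((∑ s : S0, ar n (x * s)) * 4⁻¹) := by
            rw [Finset.sum_add_distrib, ← Finset.mul_sum]
            ring
        _ = PS (n+1) x + 32 * ar (n+1) x := by
            rw [PS_succ hx, ar_succ hx]

noncomputable def Ftot (x : P4) : ℝ≥0∞ := ∑' n : ℕ, ar n x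

lemma Ftot_eq_gE (x : P4) : Ftot x = gE x := by
  refine le_antisymm ?_ ?_
  · rw [Ftot, ENNReal.tsum_eq_iSup_nat]
    exact iSup_le fun n => PS_le_gE n x
  · refine ENNReal.le_of_forall_pos_le_add fun ε hε _ => ?_
    have hr1 : ((255 : ℝ≥0∞) / 256) < 1 := by
      rw [ENNReal.div_lt_iff (by norm_num) (by norm_num)]
      norm_num
    have hlim : Tendsto (fun q : ℕ => ((255 : ℝ≥0∞) / 256) ^ q) atTop (𝓝 0) :=
      ENNReal.tendsto_pow_atTop_nhds_zero_of_lt_one hr1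
    have hlim32 : Tendsto (fun q : ℕ => 32 * ((255 : ℝ≥0∞) / 256) ^ q) atTop (𝓝 0) := by
      have := ENNReal.Tendsto.const_mul hlim (Or.inr (by norm_num : (32:ℝ≥0∞) ≠ ⊤))
      simpa using this
    have hεpos : (0 : ℝ≥0∞) < (ε : ℝ≥0∞) := ENNReal.coe_pos.2 hε
    obtain ⟨q, hq⟩ := (hlim32.eventually (gt_mem_nhds hεpos)).exists
    calc gE x ≤ PS (4*q) x + 32 * ar (4*q) x := gE_le_PS (4*q) x
      _ ≤ Ftot x + (ε : ℝ≥0∞) := by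
          refine add_le_add ?_ ?_
          · exact ENNReal.sum_le_tsum (Finset.range (4*q))
          · exact (mul_le_mul_right (ar_pow_le q x) 32).trans hq.le

end Analysis

lemma mfpt_eq_gE (μ : Measure (ℕ → S0)) (hμ : IsUniformProductMeasure S0 μ) (x : P4) :
    mfptFrom S0 μ x y0 = gE x := by
  rw [mfptFrom_eq_tsum S0 y0 hμ x, ← Ftot_eq_gE]
  unfold Ftot ar
  refine tsum_congr fun n => ?_
  rw [card_S0]
  norm_num

/-- for the symmetric group on `{1,2,3,4}` with the circular generating set
`S = {(1 2), (2 3), (3 4), (1 4)}`, the mean first passage times to the longest word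
`w₀ = (1 3)(2 4)` are `32` from the identity, `31` from `(1 2)`, `30` from `(1 2 3)`,
`28` from `(1 2)(3 4)` and `23` from `(1 2 4 3)`.
(Here `(1 2 3) = Equiv.swap 0 1 * Equiv.swap 1 2` and
`(1 2 4 3) = Equiv.swap 0 1 * Equiv.swap 1 3 * Equiv.swap 2 3`, using the convention
`(f * g) x = f (g x)`.) -/
theorem mfpt_S4_circular
    (S : Finset (Equiv.Perm (Fin 4)))
    (hS : S = {Equiv.swap 0 1, Equiv.swap 1 2, Equiv.swap 2 3, Equiv.swap 0 3})
    (μ : Measure (ℕ → S)) (hμ : IsUniformProductMeasure S μ) :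
    mfptFrom S μ 1 (Equiv.swap 0 2 * Equiv.swap 1 3) = 32 ∧
    mfptFrom S μ (Equiv.swap 0 1) (Equiv.swap 0 2 * Equiv.swap 1 3) = 31 ∧
    mfptFrom S μ (Equiv.swap 0 1 * Equiv.swap 1 2) (Equiv.swap 0 2 * Equiv.swap 1 3) = 30 ∧
    mfptFrom S μ (Equiv.swap 0 1 * Equiv.swap 2 3) (Equiv.swap 0 2 * Equiv.swap 1 3) = 28 ∧
    mfptFrom S μ (Equiv.swap 0 1 * Equiv.swap 1 3 * Equiv.swap 2 3)
      (Equiv.swap 0 2 * Equiv.swap 1 3) = 23 := by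
  subst hS
  refine ⟨?_, ?_, ?_, ?_, ?_⟩
  · exact (mfpt_eq_gE μ hμ 1).trans
      (by rw [gE, show gfun (1 : P4) = 32 from by decide]; norm_num)
  · exact (mfpt_eq_gE μ hμ (Equiv.swap 0 1)).trans
      (by rw [gE, show gfun (Equiv.swap 0 1 : P4) = 31 from by decide]; norm_num)
  · exact (mfpt_eq_gE μ hμ (Equiv.swap 0 1 * Equiv.swap 1 2)).trans
      (by rw [gE, show gfun (Equiv.swap 0 1 * Equiv.swap 1 2 : P4) = 30 from by decide]
          norm_num)
  · exact (mfpt_eq_gE μ hμ (Equiv.swap 0 1 * Equiv.swap 2 3)).trans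
      (by rw [gE, show gfun (Equiv.swap 0 1 * Equiv.swap 2 3 : P4) = 28 from by decide]
          norm_num)
  · exact (mfpt_eq_gE μ hμ (Equiv.swap 0 1 * Equiv.swap 1 3 * Equiv.swap 2 3)).trans
      (by rw [gE, show gfun (Equiv.swap 0 1 * Equiv.swap 1 3 * Equiv.swap 2 3 : P4) = 23
                from by decide]
          norm_num)
end
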